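/- arXiv:2004.14330 — 2 statements merged into one kernel-verified Lean document; each statement's English description precedes it below -/
import Mathlib

section
/- If X follows a noncentral chi-squared distribution with k ≥ 1 degrees of freedom and noncentrality parameter φ ≥ 0, then for every positive integer r there exists a constant C > 0, depending only on k and r (not on φ), such that E[X^r] ≤ C·(k + r·φ)^r. -/
open MeasureTheory ProbabilityTheory Finset

/-- The law of `∑ j, Z j ^ 2` where the `Z j` are independent unit-variance
normals with means `m j`; when `∑ j, (m j)^2 = 2 * φ`, this is the noncentral
chi-squared distribution with `k` degrees of freedom and noncentrality `φ`. -/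
noncomputable def noncentralChiSq (k : ℕ) (m : Fin k → ℝ) : Measure ℝ :=
  (Measure.pi (fun j => gaussianReal (m j) 1)).map (fun z => ∑ j, z j ^ 2)

def IsNoncentralChiSq (ν : Measure ℝ) (k : ℕ) (φ : ℝ) : Prop :=
  ∃ m : Fin k → ℝ, (∑ j, m j ^ 2) = 2 * φ ∧ ν = noncentralChiSq k m

section Aux
open Real

-- marginal of a product of probability measures
lemma map_eval_pi' {k : ℕ} (μ : Fin k → Measure ℝ) [∀ i, IsProbabilityMeasure (μ i)] (j : Fin k) :
    (Measure.pi μ).map (Function.eval j) = μ j := by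
  ext s hs
  rw [Measure.map_apply (measurable_pi_apply j) hs, Set.eval_preimage, Measure.pi_pi]
  rw [Fintype.prod_eq_single j (fun i hij => by simp [Function.update_of_ne hij])]
  simp

lemma integrable_pow_gaussian_std (n : ℕ) :
    Integrable (fun x : ℝ => x ^ n) (gaussianReal 0 1) := by
  rw [gaussianReal_of_var_ne_zero 0 one_ne_zero,
    integrable_withDensity_iff (measurable_gaussianPDF 0 1)
      (ae_of_all _ fun x => ENNReal.ofReal_lt_top)]
  have hpt : (fun x : ℝ => x ^ n * (gaussianPDF 0 1 x).toReal)
      = fun x : ℝ => (√(2 * π))⁻¹ * (x ^ (n : ℝ) * rexp (-(1/2) * x ^ 2)) := by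
    funext x
    rw [gaussianPDF, ENNReal.toReal_ofReal (gaussianPDFReal_nonneg 0 1 x), gaussianPDFReal,
      Real.rpow_natCast]
    push_cast
    ring_nf
  rw [hpt]
  exact (integrable_rpow_mul_exp_neg_mul_sq (by norm_num)
    (by exact_mod_cast neg_one_lt_zero.trans_le n.cast_nonneg)).const_mul _

lemma integrable_pow_gaussian' (m : ℝ) (n : ℕ) :
    Integrable (fun x : ℝ => x ^ n) (gaussianReal m 1) := by
  have hmap : gaussianReal m 1 = (gaussianReal 0 1).map (· + m) := by
    rw [gaussianReal_map_add_const, zero_add]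
  rw [hmap, integrable_map_measure (measurable_id'.pow_const n).aestronglyMeasurable
    (measurable_add_const m).aemeasurable]
  have : ((fun x : ℝ => x ^ n) ∘ (· + m))
      = fun y : ℝ => ∑ i ∈ Finset.range (n + 1), y ^ i * (m ^ (n - i) * (n.choose i : ℝ)) := by
    funext y
    simp [Function.comp, add_pow, mul_assoc]
  rw [this]
  exact integrable_finset_sum _ fun i _ => (integrable_pow_gaussian_std i).mul_const _

lemma pow_nonneg_even (x : ℝ) (r : ℕ) : 0 ≤ x ^ (2 * r) := by
  rw [pow_mul]; positivity

lemma gauss_moment_bound (m : ℝ) (r : ℕ) :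
    ∫ x, x ^ (2 * r) ∂(gaussianReal m 1)
      ≤ 2 ^ (2 * r) * ((∫ x, x ^ (2 * r) ∂(gaussianReal 0 1)) + m ^ (2 * r)) := by
  have hmap : gaussianReal m 1 = (gaussianReal 0 1).map (· + m) := by
    rw [gaussianReal_map_add_const, zero_add]
  rw [hmap, integral_map (measurable_add_const m).aemeasurable
    (measurable_id'.pow_const _).aestronglyMeasurable]
  have hb : Integrable (fun y : ℝ => 2 ^ (2 * r) * (y ^ (2 * r) + m ^ (2 * r)))
      (gaussianReal 0 1) :=
    ((integrable_pow_gaussian_std (2 * r)).add (integrable_const _)).const_mul _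
  calc ∫ y, (y + m) ^ (2 * r) ∂(gaussianReal 0 1)
      ≤ ∫ y, 2 ^ (2 * r) * (y ^ (2 * r) + m ^ (2 * r)) ∂(gaussianReal 0 1) := by
        apply integral_mono_of_nonneg (ae_of_all _ fun y => pow_nonneg_even _ _) hb
        refine ae_of_all _ fun y => ?_
        have h1 : (y + m) ^ (2 * r) ≤ (|y| + |m|) ^ (2 * r) := by
          calc (y + m) ^ (2 * r) = |y + m| ^ (2 * r) := by
                rw [← abs_pow, abs_of_nonneg (pow_nonneg_even _ _)]
            _ ≤ (|y| + |m|) ^ (2 * r) :=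
                pow_le_pow_left₀ (abs_nonneg _) (abs_add_le y m) _
        have h2 : (|y| + |m|) ^ (2 * r) ≤ (2 * max |y| |m|) ^ (2 * r) := by
          apply pow_le_pow_left₀ (by positivity)
          rw [two_mul]
          exact add_le_add (le_max_left _ _) (le_max_right _ _)
        have h3 : (2 * max |y| |m|) ^ (2 * r) ≤ 2 ^ (2 * r) * (y ^ (2 * r) + m ^ (2 * r)) := by
          rw [mul_pow]
          apply mul_le_mul_of_nonneg_left _ (by positivity)
          rcases max_cases |y| |m| with ⟨h, _⟩ | ⟨h, _⟩ <;> rw [h]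
          · rw [← abs_pow, abs_of_nonneg (pow_nonneg_even _ _)]
            exact le_add_of_nonneg_right (pow_nonneg_even _ _)
          · rw [← abs_pow, abs_of_nonneg (pow_nonneg_even _ _)]
            exact le_add_of_nonneg_left (pow_nonneg_even _ _)
        exact h1.trans (h2.trans h3)
    _ = 2 ^ (2 * r) * ((∫ x, x ^ (2 * r) ∂(gaussianReal 0 1)) + m ^ (2 * r)) := by
        rw [integral_const_mul, integral_add (integrable_pow_gaussian_std _) (integrable_const _),
          integral_const]
        simp

lemma sum_pow_le_pow_sum' {k : ℕ} (f : Fin k → ℝ) (hf : ∀ i, 0 ≤ f i) {r : ℕ} (hr : 1 ≤ r) :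
    ∑ i, f i ^ r ≤ (∑ i, f i) ^ r := by
  classical
  induction k with
  | zero => simp
  | succ n ih =>
    rw [Fin.sum_univ_succ, Fin.sum_univ_succ]
    calc f 0 ^ r + ∑ i : Fin n, (f i.succ) ^ r
        ≤ f 0 ^ r + (∑ i : Fin n, f i.succ) ^ r := by
          gcongr
          exact ih _ (fun i => hf _)
      _ ≤ (f 0 + ∑ i : Fin n, f i.succ) ^ r :=
          pow_add_pow_le (hf 0) (Finset.sum_nonneg fun i _ => hf _) (by omega)

theorem noncentral_chisq_moment_bound' (k : ℕ) (hk : 1 ≤ k) (r : ℕ) (hr : 1 ≤ r) :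
    ∃ C : ℝ, 0 < C ∧ ∀ (φ : ℝ), 0 ≤ φ → ∀ ν : Measure ℝ,
      (∃ m : Fin k → ℝ, (∑ j, m j ^ 2) = 2 * φ ∧
        ν = (Measure.pi (fun j => gaussianReal (m j) 1)).map (fun z => ∑ j, z j ^ 2)) →
      (∫ x, x ^ r ∂ν) ≤ C * ((k : ℝ) + r * φ) ^ r := by
  set Mr : ℝ := ∫ x, x ^ (2 * r) ∂(gaussianReal 0 1) with hMrdef
  have hMr0 : 0 ≤ Mr := integral_nonneg fun x => pow_nonneg_even _ _
  have hk0 : (0:ℝ) < (k:ℝ) := by exact_mod_cast hk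
  refine ⟨(k:ℝ) ^ (r - 1) * 2 ^ (2 * r) * (Mr + 2 ^ r), ?_, ?_⟩
  · have h2 : (0:ℝ) < Mr + 2 ^ r := by positivity
    positivity
  intro φ hφ ν hν
  obtain ⟨m, hm, rfl⟩ := hν
  have hmeasS : Measurable fun z : Fin k → ℝ => ∑ j, z j ^ 2 :=
    Finset.measurable_sum _ fun j _ => (measurable_pi_apply j).pow_const 2
  rw [integral_map hmeasS.aemeasurable
    (measurable_id'.pow_const r).aestronglyMeasurable]
  set P : Measure (Fin k → ℝ) := Measure.pi fun j => gaussianReal (m j) 1 with hP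
  have hintj : ∀ j, Integrable (fun z : Fin k → ℝ => z j ^ (2 * r)) P := by
    intro j
    have h1 : Integrable (fun x : ℝ => x ^ (2 * r)) (P.map (Function.eval j)) := by
      rw [hP, map_eval_pi']; exact integrable_pow_gaussian' (m j) (2 * r)
    exact (integrable_map_measure (measurable_id'.pow_const _).aestronglyMeasurable
      (measurable_pi_apply j).aemeasurable).mp h1
  have hjeq : ∀ j, ∫ z, z j ^ (2 * r) ∂P = ∫ x, x ^ (2 * r) ∂(gaussianReal (m j) 1) := by
    intro j
    have hmm := map_eval_pi' (fun j => gaussianReal (m j) 1) j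
    have hIM : ∫ x, x ^ (2 * r) ∂((Measure.pi fun j => gaussianReal (m j) 1).map
          (Function.eval j))
        = ∫ z, z j ^ (2 * r) ∂(Measure.pi fun j => gaussianReal (m j) 1) :=
      integral_map (measurable_pi_apply j).aemeasurable
        (measurable_id'.pow_const _).aestronglyMeasurable
    rw [hP, ← hIM, hmm]
  have key : ∫ z, (∑ j, z j ^ 2) ^ r ∂P ≤ (k:ℝ) ^ (r - 1) * ∑ j, ∫ z, z j ^ (2 * r) ∂P := by
    rw [← integral_finset_sum _ fun j _ => hintj j, ← integral_const_mul]
    apply integral_mono_of_nonneg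
    · exact ae_of_all _ fun z => pow_nonneg (Finset.sum_nonneg fun j _ => sq_nonneg _) _
    · exact (integrable_finset_sum _ fun j _ => hintj j).const_mul _
    · refine ae_of_all _ fun z => ?_
      have h := pow_sum_div_card_le_sum_pow (s := Finset.univ)
        (f := fun j => z j ^ 2) (fun j _ => sq_nonneg _) (r - 1)
      rw [Finset.card_univ, Fintype.card_fin] at h
      have hrr : r - 1 + 1 = r := by omega
      rw [hrr, div_le_iff₀ (by positivity)] at h
      calc (∑ j, z j ^ 2) ^ r ≤ (∑ j, (z j ^ 2) ^ r) * (k:ℝ) ^ (r-1) := h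
        _ = (k:ℝ) ^ (r-1) * ∑ j, z j ^ (2*r) := by
            simp_rw [← pow_mul]; ring
  have hsum : ∑ j, ∫ z, z j ^ (2 * r) ∂P
      ≤ 2 ^ (2 * r) * ((k:ℝ) * Mr + (2 * φ) ^ r) := by
    calc ∑ j, ∫ z, z j ^ (2 * r) ∂P
        ≤ ∑ j : Fin k, 2 ^ (2 * r) * (Mr + m j ^ (2 * r)) := by
          refine Finset.sum_le_sum fun j _ => ?_
          rw [hjeq j]
          exact gauss_moment_bound (m j) r
      _ = 2 ^ (2 * r) * ((k:ℝ) * Mr + ∑ j, m j ^ (2 * r)) := by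
          rw [← Finset.mul_sum, Finset.sum_add_distrib, Finset.sum_const, Finset.card_univ,
            Fintype.card_fin, nsmul_eq_mul]
      _ ≤ 2 ^ (2 * r) * ((k:ℝ) * Mr + (2 * φ) ^ r) := by
          gcongr 2 ^ (2*r) * ((k:ℝ) * Mr + ?_)
          calc ∑ j, m j ^ (2 * r) = ∑ j, (m j ^ 2) ^ r := by simp_rw [← pow_mul]
            _ ≤ (∑ j, m j ^ 2) ^ r := sum_pow_le_pow_sum' _ (fun j => sq_nonneg _) hr
            _ = (2 * φ) ^ r := by rw [hm]
  have hbase : (1:ℝ) ≤ (k:ℝ) + r * φ := by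
    have h1 : (1:ℝ) ≤ (k:ℝ) := by exact_mod_cast hk
    nlinarith [mul_nonneg (Nat.cast_nonneg r : (0:ℝ) ≤ (r:ℝ)) hφ]
  have h1 : (k:ℝ) * Mr ≤ Mr * ((k:ℝ) + r * φ) ^ r := by
    have hk' : (k:ℝ) ≤ ((k:ℝ) + r * φ) ^ r :=
      calc (k:ℝ) ≤ (k:ℝ) + r * φ := le_add_of_nonneg_right (by positivity)
        _ ≤ ((k:ℝ) + r * φ) ^ r := le_self_pow₀ hbase (by omega)
    nlinarith
  have h2 : (2 * φ) ^ r ≤ 2 ^ r * ((k:ℝ) + r * φ) ^ r := by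
    rw [mul_pow]
    gcongr
    calc φ ≤ r * φ := le_mul_of_one_le_left hφ (by exact_mod_cast hr)
      _ ≤ (k:ℝ) + r * φ := le_add_of_nonneg_left hk0.le
  calc ∫ z, (∑ j, z j ^ 2) ^ r ∂P
      ≤ (k:ℝ) ^ (r - 1) * (2 ^ (2 * r) * ((k:ℝ) * Mr + (2 * φ) ^ r)) := by
        refine key.trans ?_
        gcongr
    _ ≤ (k:ℝ) ^ (r - 1) * (2 ^ (2 * r) * ((Mr + 2 ^ r) * ((k:ℝ) + r * φ) ^ r)) := by
        gcongr
        nlinarith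
    _ = (k:ℝ) ^ (r - 1) * 2 ^ (2 * r) * (Mr + 2 ^ r) * ((k:ℝ) + r * φ) ^ r := by ring

end Aux

theorem noncentral_chisq_moment_bound (k : ℕ) (hk : 1 ≤ k) (r : ℕ) (hr : 1 ≤ r) :
    ∃ C : ℝ, 0 < C ∧ ∀ (φ : ℝ), 0 ≤ φ → ∀ ν : Measure ℝ,
      IsNoncentralChiSq ν k φ →
      (∫ x, x ^ r ∂ν) ≤ C * ((k : ℝ) + r * φ) ^ r := by
  obtain ⟨C, hC, h⟩ := noncentral_chisq_moment_bound' k hk r hr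
  exact ⟨C, hC, fun φ hφ ν hν => h φ hφ ν (by
    obtain ⟨m, h1, h2⟩ := hν; exact ⟨m, h1, h2⟩)⟩
end

section
/- Let α > 1 and let g_s denote the Gamma(α, s) density with shape α and rate s > 0. Then for S' ≥ S > 0, ∫₀^∞ |g_S(u) − g_{S'}(u)| du ≤ 2·[(S'/S)^α − 1]. -/
/-! For `S ≤ S'` the densities satisfy `g_{S'} ≤ c · g_S` with `c = (S'/S)^α`, because the
normalising constants have ratio `c` and `exp (-S' u) ≤ exp (-S u)`. For two probability
densities with `g ≤ c f` one has `|f - g| ≤ (f - g) + 2 (c - 1) f` pointwise, and integrating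
gives `∫ |f - g| ≤ 2 (c - 1)`. -/

open Real MeasureTheory ProbabilityTheory Set

theorem integral_abs_sub_le_of_ae_le_mul {Ω : Type*} [MeasurableSpace Ω] {μ : Measure Ω}
    {f g : Ω → ℝ} {c : ℝ} (hf : Integrable f μ) (hg : Integrable g μ)
    (hfg : ∫ x, f x ∂μ = ∫ x, g x ∂μ) (hf0 : 0 ≤ᵐ[μ] f) (hgf : ∀ᵐ x ∂μ, g x ≤ c * f x)
    (hc : 1 ≤ c) :
    ∫ x, |f x - g x| ∂μ ≤ 2 * (c - 1) * ∫ x, f x ∂μ := by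
  have hdiff : Integrable (fun x ↦ f x - g x) μ := hf.sub hg
  have hscaled : Integrable (fun x ↦ 2 * (c - 1) * f x) μ := hf.const_mul _
  calc ∫ x, |f x - g x| ∂μ ≤ ∫ x, (f x - g x) + 2 * (c - 1) * f x ∂μ := by
        refine integral_mono_ae hdiff.abs (hdiff.add hscaled) ?_
        filter_upwards [hf0, hgf] with x hfx hgx
        have hcf : 0 ≤ (c - 1) * f x := mul_nonneg (sub_nonneg.mpr hc) hfx
        rw [abs_sub_le_iff]
        constructor <;> linarith
    _ = 2 * (c - 1) * ∫ x, f x ∂μ := by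
        rw [integral_add hdiff hscaled, integral_sub hf hg, ← hfg,
          integral_const_mul, sub_self, zero_add]

theorem integral_gammaPDFReal_eq_one {a r : ℝ} (ha : 0 < a) (hr : 0 < r) :
    ∫ x, gammaPDFReal a r x = 1 := by
  rw [integral_eq_lintegral_of_nonneg_ae (ae_of_all _ (gammaPDFReal_nonneg ha hr))
    (measurable_gammaPDFReal a r).aestronglyMeasurable]
  have h := lintegral_gammaPDF_eq_one ha hr
  unfold gammaPDF at h
  simp [h]

theorem integrable_gammaPDFReal {a r : ℝ} (ha : 0 < a) (hr : 0 < r) :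
    Integrable (gammaPDFReal a r) :=
  Integrable.of_integral_ne_zero (by simp [integral_gammaPDFReal_eq_one ha hr])

theorem gammaPDFReal_le_rpow_div_mul {a r r' : ℝ} (ha : 0 < a) (hr : 0 < r) (hrr' : r ≤ r')
    (x : ℝ) : gammaPDFReal a r' x ≤ (r' / r) ^ a * gammaPDFReal a r x := by
  have hr' : 0 < r' := hr.trans_le hrr'
  have hΓ : 0 < Gamma a := Gamma_pos_of_pos ha
  unfold gammaPDFReal
  split_ifs with hx
  · have hexp : exp (-(r' * x)) ≤ exp (-(r * x)) := exp_le_exp.mpr (by nlinarith)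
    have hconst : (r' / r) ^ a * r ^ a = r' ^ a := by
      rw [div_rpow hr'.le hr.le, div_mul_cancel₀ _ (rpow_pos_of_pos hr a).ne']
    calc r' ^ a / Gamma a * x ^ (a - 1) * exp (-(r' * x))
        ≤ r' ^ a / Gamma a * x ^ (a - 1) * exp (-(r * x)) :=
          mul_le_mul_of_nonneg_left hexp (by positivity)
      _ = (r' / r) ^ a * (r ^ a / Gamma a * x ^ (a - 1) * exp (-(r * x))) := by
          rw [← hconst]; ring
  · simp

theorem gamma_density_L1_bound (α : ℝ) (hα : 1 < α) (S S' : ℝ)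
    (hS : 0 < S) (hSS' : S ≤ S') :
    ∫ u in Set.Ioi (0 : ℝ), |gammaPDFReal α S u - gammaPDFReal α S' u| ≤
      2 * ((S' / S) ^ α - 1) := by
  have hα0 : 0 < α := zero_lt_one.trans hα
  have hS' : 0 < S' := hS.trans_le hSS'
  have hg := integrable_gammaPDFReal hα0 hS
  have hg' := integrable_gammaPDFReal hα0 hS'
  calc ∫ u in Ioi 0, |gammaPDFReal α S u - gammaPDFReal α S' u|
      ≤ ∫ u, |gammaPDFReal α S u - gammaPDFReal α S' u| :=
        setIntegral_le_integral (hg.sub hg').abs (ae_of_all _ fun _ ↦ abs_nonneg _)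
    _ ≤ 2 * ((S' / S) ^ α - 1) * ∫ u, gammaPDFReal α S u :=
        integral_abs_sub_le_of_ae_le_mul hg hg'
          (by rw [integral_gammaPDFReal_eq_one hα0 hS, integral_gammaPDFReal_eq_one hα0 hS'])
          (ae_of_all _ (gammaPDFReal_nonneg hα0 hS))
          (ae_of_all _ (gammaPDFReal_le_rpow_div_mul hα0 hS hSS'))
          (one_le_rpow ((one_le_div hS).mpr hSS') hα0.le)
    _ = 2 * ((S' / S) ^ α - 1) := by rw [integral_gammaPDFReal_eq_one hα0 hS, mul_one]
end
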